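/- arXiv:1910.02421 — 5 statements merged into one kernel-verified Lean document; each statement's English description precedes it below -/
import Mathlib

section
/- There is no function f : ℝ → ℝ such that |h_i(x) - f(x_i)| < 1/2 for all i ∈ [n] and all x ∈ [0,1]^n, where h : ℝ^n → ℝ^n is defined by h(x) = (∑_j x_j, ∑_j x_j, ..., ∑_j x_j) (i.e., h_i(x) = ∑_{j=1}^n x_j for each i). (Here n ≥ 2.) -/
/-!
The zero vector and a standard basis vector `e_i` both have a coordinate equal to `0` (for `e_i`,
any coordinate `j ≠ i`), so `f 0` would have to lie within `1/2` of both sums, `0` and `1`.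
-/

open Set

lemma abs_sub_lt_one_of_abs_sub_lt_half {a b c : ℝ} (ha : |a - c| < 1 / 2)
    (hb : |b - c| < 1 / 2) : |a - b| < 1 :=
  calc |a - b| ≤ |a - c| + |c - b| := abs_sub_le a c b
    _ = |a - c| + |b - c| := by rw [abs_sub_comm c b]
    _ < 1 := by linarith

theorem not_exists_coordinatewise_approx_sum (ι : Type*) [Fintype ι] [Nontrivial ι] :
    ¬ ∃ f : ℝ → ℝ, ∀ x : ι → ℝ, (∀ i, x i ∈ Icc (0 : ℝ) 1) →
      ∀ i, |(∑ j, x j) - f (x i)| < 1 / 2 := by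
  classical
  rintro ⟨f, hf⟩
  obtain ⟨i, j, hij⟩ := exists_pair_ne ι
  have at_zero : |0 - f 0| < 1 / 2 := by simpa using hf 0 (by simp) i
  have at_basis_vector : |1 - f 0| < 1 / 2 := by
    have hx : ∀ k, (Pi.single i 1 : ι → ℝ) k ∈ Icc (0 : ℝ) 1 := fun k => by
      rcases eq_or_ne k i with rfl | hk <;> simp [*]
    simpa [hij.symm] using hf (Pi.single i 1) hx j
  have := abs_sub_lt_one_of_abs_sub_lt_half at_basis_vector at_zero
  norm_num at this

/-- No single univariate function applied coordinatewise can approximate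
`h(x) = (∑_j x_j, …, ∑_j x_j)` within 1/2 uniformly on `[0,1]^n` (n ≥ 2). -/
theorem pointnet_not_universal (n : ℕ) (hn : 2 ≤ n) :
    ¬ ∃ f : ℝ → ℝ, ∀ x : Fin n → ℝ, (∀ i, x i ∈ Set.Icc (0 : ℝ) 1) →
      ∀ i : Fin n, |(∑ j, x j) - f (x i)| < 1 / 2 :=
  have := Fin.nontrivial_iff_two_le.mpr hn
  not_exists_coordinatewise_approx_sum (Fin n)
end

section
/- Let p : ℝ^(n×k) → ℝ be a polynomial invariant under permutations of the last n−1 rows of X ∈ ℝ^(n×k). Then p can be written as p(X) = ∑_{|α|≤n} x_1^α q_α(X), where each q_α : ℝ^(n×k) → ℝ is a polynomial invariant under the full symmetric group S_n acting on the rows of X. -/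
/-!
Rows are indexed from `0`, so the paper's `x_1` is `X 0`.

Splitting off the first row writes a polynomial as `∑_β x_0^β c_β(x_1, …, x_m)`, and if it is
invariant under the permutations fixing row `0`, each `c_β` is symmetric in the remaining rows
(monomials in `x_0` are linearly independent). By induction on the number of rows, symmetric
polynomials are polynomials in the power sums `p_α`; since `p_α(x_1, …, x_m) = p_α(X) - x_0^α`,
such a polynomial is `∑_α x_0^α g_α` with `g_α` in the power-sum algebra. For a fully symmetric
polynomial `f`, summing `f ∘ (0 i)` over `i` then gives `(m + 1) f = ∑_α p_α g_α`, which closes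
the induction.

It remains to bound `|α|` by `n`. For a linear form `ℓ`, `ℓ(x_0)` is a root of
`∏_i (T - ℓ(x_i))`, monic of degree `n` with symmetric coefficients, so `ℓ(x_0)^d` with `d ≥ n`
is a symmetric combination of lower powers of `ℓ(x_0)`. Up to a multinomial coefficient, `x_0^β`
with `|β| = d` is a coefficient of the polynomial curve `c ↦ (c · x_0)^d`, hence lies in every
subspace containing all `(c · x_0)^d`.
-/

/-- Row-permutation action: `(σ · X) i = X (σ⁻¹ i)`. -/
def permRow {n k : ℕ} (σ : Equiv.Perm (Fin n)) (X : Fin n → Fin k → ℝ) :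
    Fin n → Fin k → ℝ := fun i => X (σ⁻¹ i)

/-- Evaluation of a polynomial in the entries of `X`. -/
noncomputable def evalP {n k : ℕ} (X : Fin n → Fin k → ℝ) (p : MvPolynomial (Fin n × Fin k) ℝ) : ℝ :=
  MvPolynomial.eval (fun v => X v.1 v.2) p

open Finset

theorem Polynomial.pow_card_eq_neg_sum_coeff_prod_X_sub_C {R ι : Type*} [CommRing R] [Fintype ι]
    (a : ι → R) (i₀ : ι) :
    a i₀ ^ Fintype.card ι =
      -∑ r ∈ range (Fintype.card ι), (∏ i, (X - C (a i))).coeff r * a i₀ ^ r := by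
  nontriviality R
  set P := ∏ i, (X - C (a i))
  have hmonic : P.Monic := monic_prod_of_monic _ _ fun i _ => monic_X_sub_C (a i)
  have hdeg : P.natDegree = Fintype.card ι := by
    simp [P, natDegree_prod_of_monic _ _ fun i _ => monic_X_sub_C (a i)]
  have hroot : P.eval (a i₀) = 0 := by
    simp [P, eval_prod, prod_eq_zero (mem_univ i₀)]
  rw [hmonic.as_sum, hdeg] at hroot
  simp only [eval_add, eval_pow, eval_X, eval_finsetSum, eval_mul, eval_C] at hroot
  linear_combination hroot

namespace RowSymmetric

section Monomials

variable {k : ℕ}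

def mpow (v : Fin k → ℝ) (α : Fin k → ℕ) : ℝ := ∏ j, v j ^ α j

@[simp] lemma mpow_zero (v : Fin k → ℝ) : mpow v 0 = 1 := by simp [mpow]

lemma mpow_add (v : Fin k → ℝ) (α β : Fin k → ℕ) : mpow v (α + β) = mpow v α * mpow v β := by
  simp [mpow, pow_add, prod_mul_distrib]

lemma sum_mul_pow_eq_sum_piAntidiag (c v : Fin k → ℝ) (d : ℕ) :
    (∑ j, c j * v j) ^ d =
      ∑ γ ∈ piAntidiag univ d, mpow c γ * (Nat.multinomial univ γ * mpow v γ) := by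
  rw [sum_pow_eq_sum_piAntidiag]
  refine sum_congr rfl fun γ _ => ?_
  simp only [mpow, mul_pow, prod_mul_distrib]
  ring

lemma eq_zero_of_forall_sum_mpow_mul_eq_zero {D : Finset (Fin k → ℕ)} {r : (Fin k → ℕ) → ℝ}
    (h : ∀ t, ∑ β ∈ D, mpow t β * r β = 0) : ∀ β ∈ D, r β = 0 := by
  let e : (Fin k → ℕ) ≃ (Fin k →₀ ℕ) := Finsupp.equivFunOnFinite.symm
  let P : MvPolynomial (Fin k) ℝ := ∑ β ∈ D, MvPolynomial.monomial (e β) (r β)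
  have hP : P = 0 := MvPolynomial.funext fun t => by
    simpa [P, MvPolynomial.eval_monomial, Finsupp.prod_pow, e, mpow, mul_comm] using h t
  intro β hβ
  simpa [P, MvPolynomial.coeff_sum, MvPolynomial.coeff_monomial, e, hβ] using
    congrArg (MvPolynomial.coeff (e β)) hP

lemma mem_of_forall_sum_mpow_smul_mem {V : Type*} [AddCommGroup V] [Module ℝ V]
    (W : Submodule ℝ V) {D : Finset (Fin k → ℕ)} {w : (Fin k → ℕ) → V}
    (h : ∀ t, ∑ β ∈ D, mpow t β • w β ∈ W) : ∀ β ∈ D, w β ∈ W := by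
  intro β hβ
  by_contra hw
  obtain ⟨φ, hφw, hφW⟩ := Submodule.exists_dual_map_eq_bot_of_notMem hw inferInstance
  refine hφw (eq_zero_of_forall_sum_mpow_mul_eq_zero (r := fun β => φ (w β)) (fun t => ?_) β hβ)
  have := Submodule.mem_map_of_mem (f := φ) (h t)
  simpa [hφW] using this

end Monomials

abbrev RowFun (m k : ℕ) := (Fin m → Fin k → ℝ) → ℝ

noncomputable def polyFuns (m k : ℕ) : Subalgebra ℝ (RowFun m k) :=
  (MvPolynomial.aeval fun (v : Fin m × Fin k) (X : Fin m → Fin k → ℝ) => X v.1 v.2).range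

def symFuns (m k : ℕ) : Subalgebra ℝ (RowFun m k) where
  carrier := {f | ∀ (σ : Equiv.Perm (Fin m)) X, f (permRow σ X) = f X}
  mul_mem' hf hg σ X := by simp [hf σ X, hg σ X]
  add_mem' hf hg σ X := by simp [hf σ X, hg σ X]
  algebraMap_mem' _ _ _ := rfl

noncomputable def symPolyFuns (m k : ℕ) : Subalgebra ℝ (RowFun m k) := polyFuns m k ⊓ symFuns m k

def powerSum (m : ℕ) {k : ℕ} (α : Fin k → ℕ) : RowFun m k := fun X => ∑ i, mpow (X i) α

def powerSumAlg (m k : ℕ) : Subalgebra ℝ (RowFun m k) := Algebra.adjoin ℝ (Set.range (powerSum m))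

section RowFunctions

variable {m k : ℕ}

lemma aeval_apply_eq_evalP (P : MvPolynomial (Fin m × Fin k) ℝ) (X : Fin m → Fin k → ℝ) :
    MvPolynomial.aeval (fun (v : Fin m × Fin k) (X : Fin m → Fin k → ℝ) => X v.1 v.2) P X =
      evalP X P := by
  change Pi.evalAlgHom ℝ (fun _ => ℝ) X (MvPolynomial.aeval _ P) = _
  rw [MvPolynomial.comp_aeval_apply]
  rfl

lemma evalP_mem_polyFuns (P : MvPolynomial (Fin m × Fin k) ℝ) :
    (fun X => evalP X P) ∈ polyFuns m k :=
  ⟨P, funext (aeval_apply_eq_evalP P)⟩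

lemma exists_eq_evalP_of_mem_polyFuns {f : RowFun m k} (hf : f ∈ polyFuns m k) :
    ∃ P, f = fun X => evalP X P := by
  obtain ⟨P, rfl⟩ := hf
  exact ⟨P, funext (aeval_apply_eq_evalP P)⟩

lemma powerSumAlg_le_symPolyFuns : powerSumAlg m k ≤ symPolyFuns m k := by
  refine Algebra.adjoin_le ?_
  rintro _ ⟨α, rfl⟩
  refine ⟨⟨∑ i, ∏ j, MvPolynomial.X (i, j) ^ α j, ?_⟩, fun σ X => ?_⟩
  · funext X
    simp [powerSum, mpow]
  · exact Equiv.sum_comp σ⁻¹ fun i => mpow (X i) α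

end RowFunctions

def firstRowPow {m k : ℕ} (α : Fin k → ℕ) : RowFun (m + 1) k := fun X => mpow (X 0) α

def firstRowSpan {m k : ℕ} (S : Subalgebra ℝ (RowFun (m + 1) k)) (s : Set (Fin k → ℕ)) :
    Submodule S (RowFun (m + 1) k) :=
  Submodule.span S (firstRowPow '' s)

section FirstRow

variable {m k : ℕ}

@[simp] lemma firstRowPow_zero : (firstRowPow 0 : RowFun (m + 1) k) = 1 := by
  funext X
  simp [firstRowPow]

lemma firstRowPow_add (α β : Fin k → ℕ) :
    (firstRowPow (α + β) : RowFun (m + 1) k) = firstRowPow α * firstRowPow β := by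
  funext X
  simp [firstRowPow, mpow_add]

lemma powerSum_comp_tail (α : Fin k → ℕ) :
    (fun X => powerSum m α (Fin.tail X)) = powerSum (m + 1) α - firstRowPow α := by
  funext X
  simp [powerSum, firstRowPow, Fin.sum_univ_succ, Fin.tail]

lemma firstRowPow_mem_firstRowSpan {S : Subalgebra ℝ (RowFun (m + 1) k)} {s : Set (Fin k → ℕ)}
    {α : Fin k → ℕ} (hα : α ∈ s) : firstRowPow α ∈ firstRowSpan S s :=
  Submodule.subset_span ⟨α, hα, rfl⟩

lemma mem_firstRowSpan_of_mem {S : Subalgebra ℝ (RowFun (m + 1) k)} {f : RowFun (m + 1) k}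
    (hf : f ∈ S) : f ∈ firstRowSpan S Set.univ := by
  simpa [Subalgebra.smul_def] using
    Submodule.smul_mem _ (⟨f, hf⟩ : S) (firstRowPow_mem_firstRowSpan (Set.mem_univ 0))

lemma mul_mem_firstRowSpan {S : Subalgebra ℝ (RowFun (m + 1) k)} {f g : RowFun (m + 1) k}
    (hf : f ∈ firstRowSpan S Set.univ) (hg : g ∈ firstRowSpan S Set.univ) :
    f * g ∈ firstRowSpan S Set.univ := by
  have hfg := Submodule.mul_mem_mul hf hg
  rw [firstRowSpan, Submodule.span_mul_span] at hfg
  refine Submodule.span_mono ?_ hfg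
  rintro _ ⟨_, ⟨α, -, rfl⟩, _, ⟨β, -, rfl⟩, rfl⟩
  exact ⟨α + β, Set.mem_univ _, firstRowPow_add α β⟩

lemma comp_tail_mem_firstRowSpan {c : RowFun m k} (hc : c ∈ powerSumAlg m k) :
    (fun X => c (Fin.tail X)) ∈ firstRowSpan (powerSumAlg (m + 1) k) Set.univ := by
  induction hc using Algebra.adjoin_induction with
  | mem _ hx =>
    obtain ⟨α, rfl⟩ := hx
    rw [powerSum_comp_tail]
    exact sub_mem (mem_firstRowSpan_of_mem (Algebra.subset_adjoin ⟨α, rfl⟩))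
      (firstRowPow_mem_firstRowSpan (Set.mem_univ α))
  | algebraMap r => exact mem_firstRowSpan_of_mem (Subalgebra.algebraMap_mem _ r)
  | add _ _ _ _ hx hy => exact add_mem hx hy
  | mul _ _ _ _ hx hy => exact mul_mem_firstRowSpan hx hy

end FirstRow

section Splitting

variable {m k : ℕ}

lemma exists_evalP_cons_eq_sum (P : MvPolynomial (Fin (m + 1) × Fin k) ℝ) :
    ∃ c : (Fin k → ℕ) →₀ MvPolynomial (Fin m × Fin k) ℝ, ∀ t X',
      evalP (Fin.cons t X') P = c.sum fun β q => mpow t β * evalP X' q := by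
  induction P using MvPolynomial.induction_on' with
  | monomial u a =>
    refine ⟨Finsupp.single (fun j => u (0, j))
      (MvPolynomial.C a * ∏ q, MvPolynomial.X q ^ u (q.1.succ, q.2)), fun t X' => ?_⟩
    rw [Finsupp.sum_single_index (by simp [evalP])]
    simp [evalP, MvPolynomial.eval_monomial, Finsupp.prod_pow,
      Fintype.prod_prod_type, Fin.prod_univ_succ, mpow]
    ring
  | add P Q hP hQ =>
    obtain ⟨c, hc⟩ := hP
    obtain ⟨d, hd⟩ := hQ
    refine ⟨c + d, fun t X' => ?_⟩
    rw [Finsupp.sum_add_index' (by simp [evalP]) (by simp [evalP, mul_add]), ← hc, ← hd]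
    exact map_add (MvPolynomial.eval _) P Q

def liftPerm (σ : Equiv.Perm (Fin m)) : Equiv.Perm (Fin (m + 1)) :=
  Equiv.Perm.decomposeFin.symm (0, σ)

@[simp] lemma liftPerm_zero (σ : Equiv.Perm (Fin m)) : liftPerm σ 0 = 0 :=
  Equiv.Perm.decomposeFin_symm_apply_zero 0 σ

@[simp] lemma liftPerm_succ (σ : Equiv.Perm (Fin m)) (i : Fin m) :
    liftPerm σ i.succ = (σ i).succ := by
  simp [liftPerm, Equiv.Perm.decomposeFin_symm_apply_succ]

lemma liftPerm_inv (σ : Equiv.Perm (Fin m)) : (liftPerm σ)⁻¹ = liftPerm σ⁻¹ := by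
  refine inv_eq_of_mul_eq_one_right (Equiv.ext fun i => ?_)
  cases i using Fin.cases <;> simp

lemma permRow_liftPerm_cons (σ : Equiv.Perm (Fin m)) (t : Fin k → ℝ) (X' : Fin m → Fin k → ℝ) :
    permRow (liftPerm σ) (Fin.cons t X') = Fin.cons t (permRow σ X') := by
  funext i
  cases i using Fin.cases <;> simp [permRow, liftPerm_inv]

end Splitting

lemma mem_firstRowSpan_of_forall_liftPerm {m k : ℕ} (hA : symPolyFuns m k ≤ powerSumAlg m k)
    (P : MvPolynomial (Fin (m + 1) × Fin k) ℝ)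
    (hP : ∀ (σ : Equiv.Perm (Fin m)) X, evalP (permRow (liftPerm σ) X) P = evalP X P) :
    (fun X => evalP X P) ∈ firstRowSpan (powerSumAlg (m + 1) k) Set.univ := by
  obtain ⟨c, hc⟩ := exists_evalP_cons_eq_sum P
  have hsym : ∀ β ∈ c.support, (fun X' => evalP X' (c β)) ∈ symFuns m k := by
    intro β hβ σ X'
    refine sub_eq_zero.mp (eq_zero_of_forall_sum_mpow_mul_eq_zero
      (r := fun β => evalP (permRow σ X') (c β) - evalP X' (c β)) (fun t => ?_) β hβ)
    simp only [mul_sub, sum_sub_distrib]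
    have h := hc t (permRow σ X')
    rw [← permRow_liftPerm_cons, hP, hc] at h
    simp only [Finsupp.sum] at h
    rw [h, sub_self]
  have hP_eq : (fun X => evalP X P) =
      ∑ β ∈ c.support, firstRowPow β * fun X => evalP (Fin.tail X) (c β) := by
    funext X
    conv_lhs => rw [← Fin.cons_self_tail X, hc]
    simp [Finsupp.sum, firstRowPow]
  rw [hP_eq]
  exact sum_mem fun β hβ => mul_mem_firstRowSpan (firstRowPow_mem_firstRowSpan (Set.mem_univ β))
    (comp_tail_mem_firstRowSpan (hA ⟨evalP_mem_polyFuns _, hsym β hβ⟩))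

def swapSum (m k : ℕ) : RowFun (m + 1) k →ₗ[ℝ] RowFun (m + 1) k :=
  ∑ i, LinearMap.funLeft ℝ ℝ (permRow (Equiv.swap 0 i))

section SwapSum

variable {m k : ℕ}

lemma swapSum_apply (f : RowFun (m + 1) k) (X : Fin (m + 1) → Fin k → ℝ) :
    swapSum m k f X = ∑ i, f (permRow (Equiv.swap 0 i) X) := by
  simp [swapSum, LinearMap.funLeft_apply]

lemma swapSum_firstRowPow (α : Fin k → ℕ) :
    swapSum m k (firstRowPow α) = powerSum (m + 1) α := by
  funext X
  simp [swapSum_apply, firstRowPow, powerSum, permRow]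

lemma swapSum_mul_of_mem_symFuns {g : RowFun (m + 1) k} (hg : g ∈ symFuns (m + 1) k)
    (f : RowFun (m + 1) k) : swapSum m k (g * f) = g * swapSum m k f := by
  funext X
  simp [swapSum_apply, hg _ X, mul_sum]

lemma swapSum_of_mem_symFuns {f : RowFun (m + 1) k} (hf : f ∈ symFuns (m + 1) k) :
    swapSum m k f = (m + 1 : ℝ) • f := by
  funext X
  simp [swapSum_apply, hf _ X]

lemma swapSum_mem_powerSumAlg {f : RowFun (m + 1) k}
    (hf : f ∈ firstRowSpan (powerSumAlg (m + 1) k) Set.univ) :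
    swapSum m k f ∈ powerSumAlg (m + 1) k := by
  induction hf using Submodule.span_induction with
  | mem _ hx =>
    obtain ⟨α, -, rfl⟩ := hx
    rw [swapSum_firstRowPow]
    exact Algebra.subset_adjoin ⟨α, rfl⟩
  | zero => simp
  | add _ _ _ _ hx hy => simpa using add_mem hx hy
  | smul g f _ hf =>
    rw [Subalgebra.smul_def, smul_eq_mul,
      swapSum_mul_of_mem_symFuns (powerSumAlg_le_symPolyFuns g.2).2]
    exact mul_mem g.2 hf

end SwapSum

theorem symPolyFuns_le_powerSumAlg (m k : ℕ) : symPolyFuns m k ≤ powerSumAlg m k := by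
  induction m with
  | zero =>
    intro f _
    have hf : f = algebraMap ℝ _ (f default) := funext fun X => congrArg f (Subsingleton.elim _ _)
    rw [hf]
    exact Subalgebra.algebraMap_mem _ _
  | succ m ih =>
    rintro f ⟨hpoly, hsym⟩
    obtain ⟨P, rfl⟩ := exists_eq_evalP_of_mem_polyFuns hpoly
    have hspan := mem_firstRowSpan_of_forall_liftPerm ih P fun σ X => hsym (liftPerm σ) X
    have hsmul := swapSum_mem_powerSumAlg hspan
    rw [swapSum_of_mem_symFuns hsym] at hsmul
    have hm : (m + 1 : ℝ) ≠ 0 := by positivity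
    simpa [smul_smul, inv_mul_cancel₀ hm] using Subalgebra.smul_mem _ hsmul ((m + 1 : ℝ)⁻¹)

def linForm {m k : ℕ} (c : Fin k → ℝ) (i : Fin m) : RowFun m k := fun X => ∑ j, c j * X i j

section DegreeReduction

variable {m k : ℕ}

lemma linForm_mem_polyFuns (c : Fin k → ℝ) (i : Fin m) : linForm c i ∈ polyFuns m k :=
  ⟨∑ j, MvPolynomial.C (c j) * MvPolynomial.X (i, j), by funext X; simp [linForm]⟩

open Polynomial in
lemma coeff_prod_X_sub_C_linForm_mem_symPolyFuns (c : Fin k → ℝ) (r : ℕ) :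
    (∏ i, (X - C (linForm c i))).coeff r ∈ symPolyFuns m k := by
  constructor
  · let Q : (polyFuns m k)[X] := ∏ i, (X - C ⟨linForm c i, linForm_mem_polyFuns c i⟩)
    have hQ : Q.map (algebraMap (polyFuns m k) (RowFun m k)) = ∏ i, (X - C (linForm c i)) := by
      simp [Q, Polynomial.map_prod]
    rw [← hQ, coeff_map]
    exact (Q.coeff r).2
  · intro σ Y
    have heval : ∀ Z : Fin m → Fin k → ℝ, (∏ i, (X - C (linForm c i))).coeff r Z =
        (∏ i, (X - C (linForm c i Z))).coeff r := fun Z => by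
      have h := coeff_map (p := ∏ i, (X - C (linForm c i))) (Pi.evalRingHom (fun _ => ℝ) Z) r
      simp only [Polynomial.map_prod, Polynomial.map_sub, Polynomial.map_X, Polynomial.map_C] at h
      exact h.symm
    rw [heval, heval]
    exact congrArg (coeff · r) (Equiv.prod_comp σ⁻¹ fun i => X - C (linForm c i Y))

lemma linForm_pow_eq_sum (c : Fin k → ℝ) (d : ℕ) :
    (linForm c 0 : RowFun (m + 1) k) ^ d =
      ∑ γ ∈ piAntidiag univ d, mpow c γ • ((Nat.multinomial univ γ : ℝ) • firstRowPow γ) := by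
  funext X
  simp [linForm, firstRowPow, sum_mul_pow_eq_sum_piAntidiag]

lemma linForm_pow_mem (W : Submodule ℝ (RowFun (m + 1) k)) (c : Fin k → ℝ) {d : ℕ}
    (h : ∀ γ ∈ piAntidiag univ d, firstRowPow γ ∈ W) : linForm c 0 ^ d ∈ W := by
  rw [linForm_pow_eq_sum]
  exact sum_mem fun γ hγ => W.smul_mem _ (W.smul_mem _ (h γ hγ))

lemma linForm_pow_mem_of_forall_lt {N : Submodule (symPolyFuns (m + 1) k) (RowFun (m + 1) k)}
    (c : Fin k → ℝ) {d : ℕ} (hd : m + 1 ≤ d) (h : ∀ d' < d, linForm c 0 ^ d' ∈ N) :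
    linForm c 0 ^ d ∈ N := by
  obtain ⟨e, rfl⟩ := Nat.exists_eq_add_of_le hd
  have hreduce := Polynomial.pow_card_eq_neg_sum_coeff_prod_X_sub_C (linForm c) (0 : Fin (m + 1))
  rw [Fintype.card_fin] at hreduce
  rw [pow_add, hreduce, neg_mul, sum_mul]
  refine neg_mem (sum_mem fun r hr => ?_)
  rw [mul_assoc, ← pow_add]
  exact N.smul_mem ⟨_, coeff_prod_X_sub_C_linForm_mem_symPolyFuns c r⟩
    (h _ (by rw [mem_range] at hr; omega))

lemma firstRowPow_mem_firstRowSpan_degree_le (β : Fin k → ℕ) :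
    firstRowPow β ∈ firstRowSpan (symPolyFuns (m + 1) k) {α | ∑ j, α j ≤ m + 1} := by
  set N := firstRowSpan (symPolyFuns (m + 1) k) {α | ∑ j, α j ≤ m + 1}
  induction hd : ∑ j, β j using Nat.strong_induction_on generalizing β with
  | _ d ih =>
  by_cases hdm : d ≤ m + 1
  · exact firstRowPow_mem_firstRowSpan (by simp [hd, hdm])
  have hpow : ∀ c, linForm c 0 ^ d ∈ N := fun c =>
    linForm_pow_mem_of_forall_lt c (by omega) fun d' hd' =>
      linForm_pow_mem (N.restrictScalars ℝ) c fun γ hγ => ih d' hd' γ (mem_piAntidiag.mp hγ).1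
  have hmul := mem_of_forall_sum_mpow_smul_mem (N.restrictScalars ℝ)
    (w := fun γ => (Nat.multinomial univ γ : ℝ) • firstRowPow γ)
    (fun t => linForm_pow_eq_sum t d ▸ hpow t) β (mem_piAntidiag.mpr ⟨hd, by simp⟩)
  have hne : (Nat.multinomial univ β : ℝ) ≠ 0 := by
    exact_mod_cast (Nat.multinomial_pos univ β).ne'
  simpa [smul_smul, inv_mul_cancel₀ hne] using
    (N.restrictScalars ℝ).smul_mem (Nat.multinomial univ β : ℝ)⁻¹ hmul

lemma mem_firstRowSpan_degree_le {f : RowFun (m + 1) k}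
    (hf : f ∈ firstRowSpan (powerSumAlg (m + 1) k) Set.univ) :
    f ∈ firstRowSpan (symPolyFuns (m + 1) k) {α | ∑ j, α j ≤ m + 1} := by
  induction hf using Submodule.span_induction with
  | mem _ hx =>
    obtain ⟨β, -, rfl⟩ := hx
    exact firstRowPow_mem_firstRowSpan_degree_le β
  | zero => exact zero_mem _
  | add _ _ _ _ hx hy => exact add_mem hx hy
  | smul g f _ hf => exact Submodule.smul_mem _ ⟨g, powerSumAlg_le_symPolyFuns g.2⟩ hf

end DegreeReduction

end RowSymmetric

open RowSymmetric

/-- Every polynomial invariant under permutations of the last `n-1` rows can be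
written as `p(X) = ∑_{|α| ≤ n} x_1^α q_α(X)` with each `q_α` invariant under the
full symmetric group acting on the rows. -/
theorem Snm1_invariant_poly_decomposition (n k : ℕ) [NeZero n]
    (p : MvPolynomial (Fin n × Fin k) ℝ)
    (hinv : ∀ σ : Equiv.Perm (Fin n), σ 0 = 0 → ∀ X : Fin n → Fin k → ℝ,
      evalP (permRow σ X) p = evalP X p) :
    ∃ (D : Finset (Fin k → ℕ)) (q : (Fin k → ℕ) → MvPolynomial (Fin n × Fin k) ℝ),
      (∀ α ∈ D, ∑ j, α j ≤ n) ∧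
      (∀ α ∈ D, ∀ (σ : Equiv.Perm (Fin n)) (X : Fin n → Fin k → ℝ),
        evalP (permRow σ X) (q α) = evalP X (q α)) ∧
      (∀ X : Fin n → Fin k → ℝ,
        evalP X p = ∑ α ∈ D, (∏ j, X 0 j ^ α j) * evalP X (q α)) := by
  obtain ⟨m, rfl⟩ := Nat.exists_eq_succ_of_ne_zero (NeZero.ne n)
  have hspan := mem_firstRowSpan_degree_le <| mem_firstRowSpan_of_forall_liftPerm
    (symPolyFuns_le_powerSumAlg m k) p fun σ => hinv _ (liftPerm_zero σ)
  rw [firstRowSpan, Finsupp.mem_span_image_iff_linearCombination] at hspan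
  obtain ⟨l, hl, hsum⟩ := hspan
  choose q hq using fun α => exists_eq_evalP_of_mem_polyFuns (l α).2.1
  refine ⟨l.support, q, fun α hα => hl hα, fun α _ σ X => ?_, fun X => ?_⟩
  · simpa [hq] using (l α).2.2 σ X
  · rw [← congrFun hsum X]
    simp [Finsupp.linearCombination_apply, Finsupp.sum, Subalgebra.smul_def, hq, firstRowPow,
      mpow, mul_comm]
end

section
/- A polynomial map P : ℝ^(n×k) → ℝ^(n×l) is permutation equivariant (P(σ·X) = σ·P(X) for all σ ∈ S_n) if and only if it can be written as P(X) = ∑_{|α|≤n} b_α(X) q_α(X)ᵀ, where b_α(X) = (x_1^α, ..., x_n^α)ᵀ ∈ ℝ^n and each q_α(X) ∈ ℝ^l has entries that are polynomials in the power-sum multi-symmetric polynomials s_β(X) = ∑_{i=1}^n x_i^β, |β| ≤ n. -/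
/-!
Write `injSum c X = ∑_{f injective} ∏_t x_{f t}^{c t}` for a list `c` of `q` multi-indices. Placing
a new slot `δ` in any row not yet used gives the Newton-type recursion
`injSum (δ :: c) = injSum c · s_δ - ∑_t injSum (c with δ added to slot t)`, so when all slots have
positive degree, `injSum c` equals `(-1)^(q-1) (q-1)! s_{∑ c}` modulo power sums of smaller degree.
With more slots than rows `injSum c = 0`; splitting a multi-index of degree `> n` into unit slots
therefore expresses `s_γ` through power sums of smaller degree, and by induction through the
`s_β`, `|β| ≤ n`. The same recursion over the rows other than row `0` expresses every `x₀^γ` as a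
combination of the `x₀^α`, `|α| ≤ n`, with coefficients polynomial in the power sums.

Symmetrising a monomial over the permutations fixing row `0` gives `x₀^{γ₀}` times such an
injective sum over the other rows. An equivariant `P` has entries `P 0 j` invariant under these
permutations, hence of the required form in row `0`; since `P i j (X) = P 0 j (swap 0 i · X)` and
power sums are invariant, the same coefficients work in every row.
-/

namespace Multisymmetric

open MvPolynomial Finset

lemma sum_add_single {κ : Type*} {q : ℕ} (c : Fin q → κ → ℕ) (t : Fin q) (δ : κ → ℕ) :
    ∑ s, (c + Pi.single t δ : Fin q → κ → ℕ) s = ∑ s, c s + δ := by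
  simp [sum_add_distrib]

section Degree

variable {κ : Type*} [Fintype κ]

def degree (β : κ → ℕ) : ℕ := ∑ j, β j

lemma degree_add (β γ : κ → ℕ) : degree (β + γ) = degree β + degree γ := by
  simp [degree, sum_add_distrib]

lemma degree_sum {q : ℕ} (c : Fin q → κ → ℕ) : degree (∑ t, c t) = ∑ t, degree (c t) := by
  simp only [degree, Finset.sum_apply]
  exact Finset.sum_comm

lemma exists_units_sum_eq [DecidableEq κ] {γ : κ → ℕ} {q : ℕ} (hq : degree γ = q) :
    ∃ c : Fin q → κ → ℕ, (∀ t, degree (c t) = 1) ∧ ∑ t, c t = γ := by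
  have hcard : Fintype.card (Σ j, Fin (γ j)) = q := by simpa [degree] using hq
  let e := Fintype.equivFinOfCardEq hcard
  refine ⟨fun t => Pi.single (e.symm t).1 1, fun t => by simp [degree], ?_⟩
  rw [Equiv.sum_comp e.symm (fun p : Σ j, Fin (γ j) => (Pi.single p.1 1 : κ → ℕ)),
    Fintype.sum_sigma]
  conv_rhs => rw [← Finset.univ_sum_single γ]
  refine sum_congr rfl fun j _ => ?_
  ext i
  by_cases h : i = j <;> simp [h]

def multiIndicesLE [DecidableEq κ] (d : ℕ) : Finset (κ → ℕ) :=
  (Fintype.piFinset fun _ => range (d + 1)).filter fun α => degree α ≤ d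

lemma mem_multiIndicesLE [DecidableEq κ] {d : ℕ} {α : κ → ℕ} :
    α ∈ multiIndicesLE d ↔ degree α ≤ d := by
  refine ⟨fun h => (mem_filter.mp h).2, fun h => mem_filter.mpr ⟨?_, h⟩⟩
  simp only [Fintype.mem_piFinset, mem_range, Nat.lt_succ_iff]
  exact fun j => (single_le_sum (f := α) (by simp) (mem_univ j)).trans h

end Degree

section Monomial

variable {M κ : Type*} [CommMonoid M] [Fintype κ]

def mpow (x : κ → M) (β : κ → ℕ) : M := ∏ j, x j ^ β j

lemma mpow_zero (x : κ → M) : mpow x 0 = 1 := by simp [mpow]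

lemma mpow_add (x : κ → M) (β γ : κ → ℕ) : mpow x (β + γ) = mpow x β * mpow x γ := by
  simp only [mpow, Pi.add_apply, pow_add, prod_mul_distrib]

lemma prod_mpow_add_single {q : ℕ} (y : Fin q → κ → M) (c : Fin q → κ → ℕ) (t : Fin q)
    (δ : κ → ℕ) :
    ∏ s, mpow (y s) ((c + Pi.single t δ : Fin q → κ → ℕ) s) =
      (∏ s, mpow (y s) (c s)) * mpow (y t) δ := by
  simp only [Pi.add_apply, mpow_add, prod_mul_distrib]
  congr 1
  rw [Fintype.prod_eq_single t fun s hs => by simp [hs, mpow_zero]]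
  simp

end Monomial

section InjSum

variable {R ι κ : Type*} [CommRing R] [Fintype ι] [Fintype κ]

def powerSum (β : κ → ℕ) (X : ι → κ → R) : R := ∑ i, mpow (X i) β

lemma powerSum_comp_perm (β : κ → ℕ) (σ : Equiv.Perm ι) (X : ι → κ → R) :
    powerSum β (fun i => X (σ i)) = powerSum β X :=
  Equiv.sum_comp σ fun i => mpow (X i) β

noncomputable def injSum {q : ℕ} (c : Fin q → κ → ℕ) (X : ι → κ → R) : R :=
  ∑ f : Fin q ↪ ι, ∏ t, mpow (X (f t)) (c t)

lemma injSum_zero (c : Fin 0 → κ → ℕ) : injSum c = (1 : (ι → κ → R) → R) := by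
  ext X
  simp [injSum]

lemma injSum_eq_zero_of_card_lt {q : ℕ} (c : Fin q → κ → ℕ) (h : Fintype.card ι < q) :
    injSum c = (0 : (ι → κ → R) → R) := by
  have := Function.Embedding.isEmpty_of_card_lt (α := Fin q) (β := ι) (by simpa using h)
  ext X
  simp [injSum]

lemma sum_notMem_range {q : ℕ} (e : Fin q ↪ ι) [Fintype {a // a ∉ Set.range e}] (g : ι → R) :
    ∑ a : {a // a ∉ Set.range e}, g a = ∑ a, g a - ∑ t, g (e t) := by
  classical
  rw [eq_sub_iff_add_eq, ← Fintype.sum_subtype_add_sum_subtype (· ∈ Set.range e) g, add_comm]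
  congr 1
  · convert Fintype.sum_equiv (Equiv.ofInjective e e.injective) (fun t => g (e t))
      (fun a : Set.range e => g a) fun _ => rfl
  · congr
    exact Subsingleton.elim _ _

lemma injSum_cons {q : ℕ} (δ : κ → ℕ) (c : Fin q → κ → ℕ) :
    injSum (Fin.cons δ c) = injSum c * powerSum δ -
      ∑ t, injSum (c + Pi.single t δ : Fin q → κ → ℕ) (ι := ι) (R := R) := by
  classical
  ext X
  simp only [Pi.sub_apply, Pi.mul_apply, Finset.sum_apply, injSum, powerSum]
  rw [← Equiv.sum_comp (Equiv.embeddingFinSucc q ι).symm, Fintype.sum_sigma]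
  simp only [Equiv.coe_embeddingFinSucc_symm, Fin.prod_univ_succ, Fin.cons_zero, Fin.cons_succ,
    prod_mpow_add_single]
  rw [sum_comm (s := univ) (t := univ) (f := fun t f => _ * _), sum_mul, ← sum_sub_distrib]
  refine sum_congr rfl fun f _ => ?_
  rw [← sum_mul, sum_notMem_range f fun a => mpow (X a) δ, ← mul_sum]
  ring

variable (R ι κ) in
noncomputable def powerSumAlgebra (d : ℕ) : Subalgebra R ((ι → κ → R) → R) :=
  (aeval fun β : {β : κ → ℕ // ∑ j, β j ≤ d} => (powerSum β.1 : (ι → κ → R) → R)).range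

lemma aeval_powerSum_apply {d : ℕ} (p : MvPolynomial {β : κ → ℕ // ∑ j, β j ≤ d} R)
    (X : ι → κ → R) :
    aeval (fun β : {β : κ → ℕ // ∑ j, β j ≤ d} => (powerSum β.1 : (ι → κ → R) → R)) p X =
      eval (fun β : {β : κ → ℕ // ∑ j, β j ≤ d} => powerSum β.1 X) p := by
  rw [← coe_aeval_eq_eval]
  exact DFunLike.congr_fun (comp_aeval (f := fun β : {β : κ → ℕ // ∑ j, β j ≤ d} =>
    (powerSum β.1 : (ι → κ → R) → R)) (Pi.evalAlgHom R (fun _ => R) X)) p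

lemma powerSum_mem_of_degree_le {d : ℕ} {β : κ → ℕ} (h : degree β ≤ d) :
    powerSum β ∈ powerSumAlgebra R ι κ d :=
  ⟨X ⟨β, h⟩, aeval_X _ _⟩

lemma injSum_cons_sub_smul {q : ℕ} (δ : κ → ℕ) (c : Fin (q + 1) → κ → ℕ)
    (v : (ι → κ → R) → R) :
    injSum (Fin.cons δ c) - ((-1) ^ (q + 1) * (q + 1).factorial : R) • v =
      injSum c * powerSum δ - ∑ t, (injSum (c + Pi.single t δ : Fin (q + 1) → κ → ℕ) -
        ((-1) ^ q * q.factorial : R) • v) := by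
  rw [injSum_cons, sum_sub_distrib, sum_const, card_univ, Fintype.card_fin, Nat.factorial_succ]
  push_cast
  module

lemma injSum_sub_smul_powerSum_mem {S : Subalgebra R ((ι → κ → R) → R)} :
    ∀ {q : ℕ} (c : Fin (q + 1) → κ → ℕ), (∀ t, 0 < degree (c t)) →
      (∀ β, degree β < degree (∑ t, c t) → powerSum β ∈ S) →
      injSum c - ((-1) ^ q * q.factorial : R) • powerSum (∑ t, c t) ∈ S := by
  intro q
  induction q with
  | zero =>
    refine Fin.consCases fun δ c _ _ => ?_
    simp [injSum_cons, injSum_zero]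
  | succ q ih =>
    refine Fin.consCases fun δ c hpos hS => ?_
    have hδ : 0 < degree δ := by simpa using hpos 0
    have hc : ∀ t, 0 < degree (c t) := fun t => by simpa using hpos t.succ
    have hsum : ∑ t, (Fin.cons δ c : Fin (q + 2) → κ → ℕ) t = ∑ t, c t + δ := by
      rw [Fin.sum_cons, add_comm]
    rw [hsum] at hS ⊢
    have hdeg : degree (∑ t, c t + δ) = degree (∑ t, c t) + degree δ := degree_add _ _
    have hcpos : 0 < degree (∑ t, c t) := by
      rw [degree_sum]
      exact (hc 0).trans_le (single_le_sum (f := fun t => degree (c t)) (by simp) (mem_univ 0))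
    have hcS : injSum c ∈ S := by
      have hsc := S.smul_mem (hS (∑ t, c t) (by omega)) ((-1) ^ q * q.factorial : R)
      simpa using S.add_mem (ih c hc fun β hβ => hS β (by omega)) hsc
    have hmerged : ∀ t, injSum (c + Pi.single t δ : Fin (q + 1) → κ → ℕ) -
        ((-1) ^ q * q.factorial : R) • powerSum (∑ t, c t + δ) ∈ S := by
      intro t
      have := ih (c + Pi.single t δ) (fun s => ?_) (by rwa [sum_add_single])
      · rwa [sum_add_single] at this
      · simp only [Pi.add_apply, degree_add]; have := hc s; omega
    rw [injSum_cons_sub_smul]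
    exact S.sub_mem (S.mul_mem hcS (hS δ (by omega))) (S.sum_mem fun t _ => hmerged t)

end InjSum

theorem powerSum_mem_powerSumAlgebra {R ι κ : Type*} [Field R] [CharZero R] [Fintype ι]
    [Fintype κ] (γ : κ → ℕ) : powerSum γ ∈ powerSumAlgebra R ι κ (Fintype.card ι) := by
  classical
  induction h : degree γ using Nat.strong_induction_on generalizing γ with
  | _ d ih =>
  by_cases hd : d ≤ Fintype.card ι
  · exact powerSum_mem_of_degree_le (h ▸ hd)
  obtain ⟨q, rfl⟩ : ∃ q, d = q + 1 := Nat.exists_eq_add_one_of_ne_zero (by omega)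
  obtain ⟨c, hc, rfl⟩ := exists_units_sum_eq h
  have := injSum_sub_smul_powerSum_mem c (by simp [hc]) fun β hβ => ih _ (h ▸ hβ) β rfl
  rw [injSum_eq_zero_of_card_lt c (by omega), zero_sub, ← neg_smul] at this
  have hu : -((-1) ^ q * q.factorial : R) ≠ 0 := by simp [Nat.factorial_ne_zero]
  exact (Submodule.smul_mem_iff (Subalgebra.toSubmodule (powerSumAlgebra R ι κ _)) hu).mp this

section RowModule

variable {R κ : Type*} [CommRing R] [Fintype κ] {m : ℕ}

def rowMonomial (α : κ → ℕ) (X : Fin (m + 1) → κ → R) : R := mpow (X 0) α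

noncomputable def pointedInjSum {q : ℕ} (γ₀ : κ → ℕ) (c : Fin q → κ → ℕ)
    (X : Fin (m + 1) → κ → R) : R :=
  mpow (X 0) γ₀ * injSum c (Fin.tail X)

lemma powerSum_eq_add_tail (δ : κ → ℕ) (X : Fin (m + 1) → κ → R) :
    powerSum δ X = mpow (X 0) δ + powerSum δ (Fin.tail X) :=
  Fin.sum_univ_succ _

lemma pointedInjSum_zero (γ₀ : κ → ℕ) (c : Fin 0 → κ → ℕ) :
    pointedInjSum γ₀ c = (rowMonomial γ₀ : (Fin (m + 1) → κ → R) → R) := by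
  ext X
  simp [pointedInjSum, rowMonomial, injSum_zero]

lemma pointedInjSum_cons {q : ℕ} (γ₀ δ : κ → ℕ) (c : Fin q → κ → ℕ) :
    pointedInjSum γ₀ (Fin.cons δ c) =
      (pointedInjSum γ₀ c * powerSum δ - pointedInjSum (γ₀ + δ) c -
        ∑ t, pointedInjSum γ₀ (c + Pi.single t δ : Fin q → κ → ℕ) :
          (Fin (m + 1) → κ → R) → R) := by
  ext X
  simp only [pointedInjSum, injSum_cons, Pi.sub_apply, Pi.mul_apply, Finset.sum_apply,
    powerSum_eq_add_tail δ X, mpow_add, ← mul_sum]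
  ring

lemma pointedInjSum_cons_sub_smul {q : ℕ} (γ₀ δ : κ → ℕ) (c : Fin q → κ → ℕ)
    (v : (Fin (m + 1) → κ → R) → R) :
    pointedInjSum γ₀ (Fin.cons δ c) - ((-1) ^ (q + 1) * (q + 1).factorial : R) • v =
      pointedInjSum γ₀ c * powerSum δ -
        (pointedInjSum (γ₀ + δ) c - ((-1) ^ q * q.factorial : R) • v) -
        ∑ t, (pointedInjSum γ₀ (c + Pi.single t δ : Fin q → κ → ℕ) -
          ((-1) ^ q * q.factorial : R) • v) := by
  rw [pointedInjSum_cons, sum_sub_distrib, sum_const, card_univ, Fintype.card_fin,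
    Nat.factorial_succ]
  push_cast
  module

lemma eval_monomial_eq_mpow (u : Fin (m + 1) × κ →₀ ℕ) (a : R) (Y : Fin (m + 1) → κ → R) :
    eval (fun v => Y v.1 v.2) (monomial u a) =
      a * (mpow (Y 0) (fun j => u (0, j)) *
        ∏ t : Fin m, mpow (Y t.succ) fun j => u (t.succ, j)) := by
  rw [eval_monomial, Finsupp.prod_fintype _ _ (by simp), Fintype.prod_prod_type,
    Fin.prod_univ_succ]
  rfl

lemma sum_perm_prod_mpow (c : Fin m → κ → ℕ) (Y : Fin m → κ → R) :
    ∑ τ : Equiv.Perm (Fin m), ∏ t, mpow (Y (τ t)) (c t) = injSum c Y := by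
  rw [injSum, ← Equiv.sum_comp (Equiv.embeddingEquivOfFinite (Fin m)).symm]
  rfl

variable [DecidableEq κ]

variable (R κ m) in
noncomputable def rowModule :
    Submodule (powerSumAlgebra R (Fin (m + 1)) κ (m + 1)) ((Fin (m + 1) → κ → R) → R) :=
  Submodule.span _ (rowMonomial '' (multiIndicesLE (κ := κ) (m + 1) : Set (κ → ℕ)))

theorem exists_eq_sum_of_mem_rowModule {g : (Fin (m + 1) → κ → R) → R}
    (hg : g ∈ rowModule R κ m) :
    ∃ p : (κ → ℕ) → MvPolynomial {β : κ → ℕ // ∑ j, β j ≤ m + 1} R, ∀ X,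
      g X = ∑ α ∈ multiIndicesLE (m + 1),
        mpow (X 0) α * eval (fun β : {β : κ → ℕ // ∑ j, β j ≤ m + 1} => powerSum β.1 X) (p α) := by
  obtain ⟨c, hc⟩ := (Submodule.mem_span_image_finset_iff_exists_fun' _).mp hg
  choose p hp using fun α => (AlgHom.mem_range _).mp (c α).2
  refine ⟨p, fun X => ?_⟩
  rw [← hc, Finset.sum_apply]
  refine sum_congr rfl fun α _ => ?_
  rw [Subalgebra.smul_def, smul_eq_mul, Pi.mul_apply, ← hp, aeval_powerSum_apply, mul_comm]
  rfl

end RowModule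

section RowModuleMembership

variable {R κ : Type*} [Field R] [CharZero R] [Fintype κ] {m : ℕ}

lemma powerSum_mem_powerSumAlgebra_fin (δ : κ → ℕ) :
    powerSum δ ∈ powerSumAlgebra R (Fin (m + 1)) κ (m + 1) := by
  simpa using powerSum_mem_powerSumAlgebra (R := R) (ι := Fin (m + 1)) δ

lemma pointedInjSum_sub_smul_rowMonomial_mem
    {N : Submodule (powerSumAlgebra R (Fin (m + 1)) κ (m + 1)) ((Fin (m + 1) → κ → R) → R)} :
    ∀ {q : ℕ} (γ₀ : κ → ℕ) (c : Fin q → κ → ℕ), (∀ t, 0 < degree (c t)) →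
      (∀ β, degree β < degree (γ₀ + ∑ t, c t) → rowMonomial β ∈ N) →
      pointedInjSum γ₀ c - ((-1) ^ q * q.factorial : R) • rowMonomial (γ₀ + ∑ t, c t) ∈ N := by
  intro q
  induction q with
  | zero => intro γ₀ c _ _; simp [pointedInjSum_zero]
  | succ q ih =>
    refine fun γ₀ => Fin.consCases fun δ c hpos hN => ?_
    have hδ : 0 < degree δ := by simpa using hpos 0
    have hc : ∀ t, 0 < degree (c t) := fun t => by simpa using hpos t.succ
    rw [Fin.sum_cons, ← add_assoc] at hN ⊢
    have hdeg : degree (γ₀ + δ + ∑ t, c t) = degree (γ₀ + ∑ t, c t) + degree δ := by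
      simp only [degree_add]; ring
    have hcN : pointedInjSum γ₀ c ∈ N := by
      have hrow := N.smul_of_tower_mem ((-1) ^ q * q.factorial : R)
        (hN (γ₀ + ∑ t, c t) (by omega))
      simpa using N.add_mem (ih γ₀ c hc fun β hβ => hN β (by omega)) hrow
    have hmul : pointedInjSum γ₀ c * powerSum δ ∈ N := by
      rw [mul_comm]
      exact N.smul_mem ⟨powerSum δ, powerSum_mem_powerSumAlgebra_fin δ⟩ hcN
    have hmerged : ∀ t, pointedInjSum γ₀ (c + Pi.single t δ : Fin q → κ → ℕ) -
        ((-1) ^ q * q.factorial : R) • rowMonomial (γ₀ + δ + ∑ t, c t) ∈ N := by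
      intro t
      have hsum : γ₀ + ∑ s, (c + Pi.single t δ : Fin q → κ → ℕ) s = γ₀ + δ + ∑ t, c t := by
        rw [sum_add_single]; abel
      have := ih γ₀ (c + Pi.single t δ) (fun s => ?_) (by rwa [hsum])
      · rwa [hsum] at this
      · simp only [Pi.add_apply, degree_add]; have := hc s; omega
    rw [pointedInjSum_cons_sub_smul]
    exact N.sub_mem (N.sub_mem hmul (ih (γ₀ + δ) c hc hN)) (N.sum_mem fun t _ => hmerged t)

variable [DecidableEq κ]

theorem rowMonomial_mem_rowModule (γ : κ → ℕ) : rowMonomial γ ∈ rowModule R κ m := by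
  induction h : degree γ using Nat.strong_induction_on generalizing γ with
  | _ d ih =>
  by_cases hd : d ≤ m + 1
  · exact Submodule.subset_span ⟨γ, mem_multiIndicesLE.mpr (h ▸ hd), rfl⟩
  obtain ⟨c, hc, rfl⟩ := exists_units_sum_eq h
  have := pointedInjSum_sub_smul_rowMonomial_mem 0 c (by simp [hc])
    fun β hβ => ih _ (by simpa [h] using hβ) β rfl
  have hzero : pointedInjSum 0 c = (0 : (Fin (m + 1) → κ → R) → R) := by
    ext X
    simp [pointedInjSum, injSum_eq_zero_of_card_lt c (ι := Fin m) (R := R) (by simp; omega)]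
  rw [hzero, zero_add, zero_sub, Submodule.neg_mem_iff] at this
  have hu : ((-1) ^ d * d.factorial : R) ≠ 0 := by simp [Nat.factorial_ne_zero]
  have := (rowModule R κ m).smul_of_tower_mem ((-1) ^ d * d.factorial : R)⁻¹ this
  rwa [smul_smul, inv_mul_cancel₀ hu, one_smul] at this

theorem pointedInjSum_mem_rowModule :
    ∀ {q : ℕ} (γ₀ : κ → ℕ) (c : Fin q → κ → ℕ), pointedInjSum γ₀ c ∈ rowModule R κ m := by
  intro q
  induction q with
  | zero => intro γ₀ c; simpa [pointedInjSum_zero] using rowMonomial_mem_rowModule γ₀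
  | succ q ih =>
    refine fun γ₀ => Fin.consCases fun δ c => ?_
    rw [pointedInjSum_cons, mul_comm]
    refine Submodule.sub_mem _ (Submodule.sub_mem _ ?_ (ih _ c))
      (Submodule.sum_mem _ fun t _ => ih _ _)
    exact Submodule.smul_mem _ ⟨powerSum δ, powerSum_mem_powerSumAlgebra_fin δ⟩ (ih γ₀ c)

/-- `Equiv.Perm.decomposeFin.symm (0, τ)` fixes row `0` and permutes the other rows by `τ`. -/
lemma sum_eval_decomposeFin_mem_rowModule (p : MvPolynomial (Fin (m + 1) × κ) R) :
    (fun X => ∑ τ : Equiv.Perm (Fin m),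
      eval (fun v => X (Equiv.Perm.decomposeFin.symm (0, τ) v.1) v.2) p) ∈ rowModule R κ m := by
  induction p using MvPolynomial.induction_on' with
  | monomial u a =>
    have : (fun X => ∑ τ : Equiv.Perm (Fin m),
        eval (fun v => X (Equiv.Perm.decomposeFin.symm (0, τ) v.1) v.2) (monomial u a)) =
        a • pointedInjSum (fun j => u (0, j)) fun t j => u (t.succ, j) := by
      ext X
      rw [Pi.smul_apply, smul_eq_mul, pointedInjSum, ← sum_perm_prod_mpow, mul_sum, mul_sum]
      refine sum_congr rfl fun τ _ => ?_
      rw [eval_monomial_eq_mpow u a fun i => X (Equiv.Perm.decomposeFin.symm (0, τ) i)]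
      simp [Fin.tail]
    rw [this]
    exact Submodule.smul_of_tower_mem _ a (pointedInjSum_mem_rowModule _ _)
  | add p q hp hq =>
    simpa only [map_add, sum_add_distrib, Pi.add_def] using Submodule.add_mem _ hp hq

theorem eval_mem_rowModule_of_invariant (p : MvPolynomial (Fin (m + 1) × κ) R)
    (hp : ∀ σ : Equiv.Perm (Fin (m + 1)), σ 0 = 0 → ∀ X : Fin (m + 1) → κ → R,
      eval (fun v => X (σ v.1) v.2) p = eval (fun v => X v.1 v.2) p) :
    (fun X => eval (fun v => X v.1 v.2) p) ∈ rowModule R κ m := by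
  have hsum : (fun X : Fin (m + 1) → κ → R => ∑ τ : Equiv.Perm (Fin m),
      eval (fun v => X (Equiv.Perm.decomposeFin.symm (0, τ) v.1) v.2) p) =
        (m.factorial : R) • fun X => eval (fun v => X v.1 v.2) p := by
    ext X
    simp [hp _ (Equiv.Perm.decomposeFin_symm_apply_zero 0 _), Fintype.card_perm]
  have := (rowModule R κ m).smul_of_tower_mem (m.factorial : R)⁻¹
    (hsum ▸ sum_eval_decomposeFin_mem_rowModule p)
  rwa [smul_smul, inv_mul_cancel₀ (by simp [Nat.factorial_ne_zero]), one_smul] at this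

end RowModuleMembership

end Multisymmetric

lemma sum_prod_permRow {n k : ℕ} (σ : Equiv.Perm (Fin n)) (X : Fin n → Fin k → ℝ)
    (β : Fin k → ℕ) : ∑ r, ∏ m, permRow σ X r m ^ β m = ∑ r, ∏ m, X r m ^ β m :=
  Multisymmetric.powerSum_comp_perm β σ⁻¹ X

open Multisymmetric in
/-- Characterization of permutation-equivariant polynomial maps
`P : ℝ^{n×k} → ℝ^{n×l}`: `P` is equivariant iff `P(X) = ∑_{|α|≤n} b_α(X) q_α(X)ᵀ`,
where `b_α(X) = (x_1^α, …, x_n^α)ᵀ` and each entry of `q_α(X)` is a polynomial in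
the power-sum multi-symmetric polynomials `s_β(X) = ∑_i x_i^β`, `|β| ≤ n`. -/
theorem equivariant_poly_characterization (n k l : ℕ)
    (P : Fin n → Fin l → MvPolynomial (Fin n × Fin k) ℝ) :
    (∀ (σ : Equiv.Perm (Fin n)) (X : Fin n → Fin k → ℝ) (i : Fin n) (j : Fin l),
        evalP (permRow σ X) (P i j) = evalP X (P (σ⁻¹ i) j))
    ↔ ∃ (D : Finset (Fin k → ℕ))
        (q : (Fin k → ℕ) → Fin l → MvPolynomial {β : Fin k → ℕ // ∑ j, β j ≤ n} ℝ),
        (∀ α ∈ D, ∑ j, α j ≤ n) ∧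
        ∀ (X : Fin n → Fin k → ℝ) (i : Fin n) (j : Fin l),
          evalP X (P i j) =
            ∑ α ∈ D, (∏ m, X i m ^ α m) *
              MvPolynomial.eval
                (fun β : {β : Fin k → ℕ // ∑ j, β j ≤ n} => ∑ r, ∏ m, X r m ^ β.1 m) (q α j) := by
  constructor
  · intro hP
    cases n with
    | zero => exact ⟨∅, fun _ _ => 0, by simp, fun _ i => i.elim0⟩
    | succ m =>
      have hrow : ∀ j, (fun X => evalP X (P 0 j)) ∈ rowModule ℝ (Fin k) m := fun j =>
        eval_mem_rowModule_of_invariant _ fun σ hσ X => by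
          simpa [permRow, evalP, hσ] using hP σ⁻¹ X 0 j
      choose q hq using fun j => exists_eq_sum_of_mem_rowModule (hrow j)
      refine ⟨multiIndicesLE (m + 1), fun α j => q j α, fun α hα => mem_multiIndicesLE.mp hα,
        fun X i j => ?_⟩
      have hswap : (Equiv.swap 0 i)⁻¹ 0 = i := by simp
      rw [← hswap, ← hP, hq]
      simp only [mpow, powerSum, sum_prod_permRow]
      rfl
  · rintro ⟨D, q, -, hrep⟩ σ X i j
    simp only [hrep, sum_prod_permRow]
    rfl
end

section
/- Permutation-equivariant polynomial maps P : ℝ^(n×k_in) → ℝ^(n×k_out) are dense, in the uniform (sup) norm over the cube K = [0,1]^(n×k_in), in the space of continuous permutation-equivariant functions F : ℝ^(n×k_in) → ℝ^(n×k_out) restricted to K. -/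
/-!
Each output coordinate of `F` is approximated on the compact set `K` by a polynomial
(Stone–Weierstrass: the entry functions separate points). Averaging the resulting polynomial map
over `Sₙ` makes it equivariant without losing accuracy: since `F` is equivariant and `K` is
`Sₙ`-invariant, the error of the average at `X` is an average of errors at the points
`τ · X ∈ K`.
-/

open Finset MvPolynomial
open scoped BigOperators

section
variable {n k m : ℕ}

lemma permRow_mul (σ τ : Equiv.Perm (Fin n)) (X : Fin n → Fin k → ℝ) :
    permRow (σ * τ) X = permRow σ (permRow τ X) :=
  rfl

lemma permRow_mem_Icc {X : Fin n → Fin k → ℝ} (σ : Equiv.Perm (Fin n))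
    (hX : X ∈ Set.Icc 0 1) :
    permRow σ X ∈ Set.Icc 0 1 :=
  ⟨fun i => hX.1 (σ⁻¹ i), fun i => hX.2 (σ⁻¹ i)⟩

lemma evalP_rename_perm (σ : Equiv.Perm (Fin n)) (X : Fin n → Fin k → ℝ)
    (p : MvPolynomial (Fin n × Fin k) ℝ) :
    evalP X (rename (Prod.map σ id) p) = evalP (permRow σ⁻¹ X) p := by
  simp only [evalP, eval_rename]
  rfl

lemma evalP_expect {ι : Type*} (s : Finset ι) (X : Fin n → Fin k → ℝ)
    (p : ι → MvPolynomial (Fin n × Fin k) ℝ) :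
    evalP X (𝔼 i ∈ s, p i) = 𝔼 i ∈ s, evalP X (p i) :=
  map_expect ((aeval fun v : Fin n × Fin k => X v.1 v.2).toLinearMap.restrictScalars ℚ≥0) _ _

/-- The Reynolds operator: the average of `Q` over the conjugation action of `Sₙ`. -/
noncomputable def symmetrize (Q : Fin n → Fin m → MvPolynomial (Fin n × Fin k) ℝ)
    (i : Fin n) (j : Fin m) : MvPolynomial (Fin n × Fin k) ℝ :=
  𝔼 τ : Equiv.Perm (Fin n), rename (Prod.map τ id) (Q (τ⁻¹ i) j)

lemma evalP_symmetrize (Q : Fin n → Fin m → MvPolynomial (Fin n × Fin k) ℝ)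
    (X : Fin n → Fin k → ℝ) (i : Fin n) (j : Fin m) :
    evalP X (symmetrize Q i j) =
      𝔼 τ : Equiv.Perm (Fin n), evalP (permRow τ⁻¹ X) (Q (τ⁻¹ i) j) := by
  simp only [symmetrize, evalP_expect, evalP_rename_perm]

lemma evalP_symmetrize_permRow (Q : Fin n → Fin m → MvPolynomial (Fin n × Fin k) ℝ)
    (σ : Equiv.Perm (Fin n)) (X : Fin n → Fin k → ℝ) (i : Fin n) (j : Fin m) :
    evalP (permRow σ X) (symmetrize Q i j) = evalP X (symmetrize Q (σ⁻¹ i) j) := by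
  rw [evalP_symmetrize, evalP_symmetrize]
  refine Fintype.expect_equiv (Equiv.mulLeft σ⁻¹) _ _ fun τ => ?_
  simp only [Equiv.coe_mulLeft, mul_inv_rev, inv_inv, permRow_mul, Equiv.Perm.mul_apply,
    Equiv.Perm.coe_inv, Equiv.apply_symm_apply]

lemma eq_expect_of_equivariant {F : (Fin n → Fin k → ℝ) → Fin n → Fin m → ℝ}
    (hF : ∀ (σ : Equiv.Perm (Fin n)) X i, F (permRow σ X) i = F X (σ⁻¹ i))
    (X : Fin n → Fin k → ℝ) (i : Fin n) (j : Fin m) :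
    F X i j = 𝔼 τ : Equiv.Perm (Fin n), F (permRow τ⁻¹ X) (τ⁻¹ i) j := by
  simp only [hF, inv_inv, Equiv.Perm.coe_inv, Equiv.apply_symm_apply, Fintype.expect_const]

noncomputable def evalPAlgHom :
    MvPolynomial (Fin n × Fin k) ℝ →ₐ[ℝ] C(Fin n → Fin k → ℝ, ℝ) :=
  aeval fun v => ⟨fun X => X v.1 v.2, by fun_prop⟩

lemma evalPAlgHom_apply (p : MvPolynomial (Fin n × Fin k) ℝ) (X : Fin n → Fin k → ℝ) :
    evalPAlgHom p X = evalP X p := by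
  change (ContinuousMap.evalAlgHom ℝ ℝ X).comp evalPAlgHom p = _
  rw [evalPAlgHom, comp_aeval, evalP, ← coe_aeval_eq_eval]
  rfl

lemma separatesPoints_range_evalPAlgHom :
    (evalPAlgHom : MvPolynomial (Fin n × Fin k) ℝ →ₐ[ℝ] _).range.SeparatesPoints := by
  intro X Y hXY
  obtain ⟨i, j, hij⟩ : ∃ i j, X i j ≠ Y i j := by
    by_contra! h
    exact hXY (funext₂ h)
  exact ⟨_, ⟨evalPAlgHom (.X (i, j)), AlgHom.mem_range_self _ _, rfl⟩, by
    simpa [evalPAlgHom_apply, evalP] using hij⟩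

lemma exists_evalP_near_of_isCompact {K : Set (Fin n → Fin k → ℝ)} (hK : IsCompact K)
    (f : C(Fin n → Fin k → ℝ, ℝ)) {ε : ℝ} (hε : 0 < ε) :
    ∃ p : MvPolynomial (Fin n × Fin k) ℝ, ∀ X ∈ K, |f X - evalP X p| < ε := by
  obtain ⟨g, ⟨p, rfl⟩, hg⟩ :=
    ContinuousMap.exists_mem_subalgebra_near_continuous_of_isCompact_of_separatesPoints
      separatesPoints_range_evalPAlgHom f hK hε
  refine ⟨p, fun X hX => ?_⟩
  rw [abs_sub_comm, ← evalPAlgHom_apply]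
  exact hg X hX

lemma abs_sub_evalP_symmetrize_lt {K : Set (Fin n → Fin k → ℝ)}
    (hK : ∀ (σ : Equiv.Perm (Fin n)), ∀ X ∈ K, permRow σ X ∈ K)
    {F : (Fin n → Fin k → ℝ) → Fin n → Fin m → ℝ}
    (hF : ∀ (σ : Equiv.Perm (Fin n)) X i, F (permRow σ X) i = F X (σ⁻¹ i))
    {Q : Fin n → Fin m → MvPolynomial (Fin n × Fin k) ℝ} {ε : ℝ}
    (hQ : ∀ X ∈ K, ∀ i j, |F X i j - evalP X (Q i j)| < ε) :
    ∀ X ∈ K, ∀ i j, |F X i j - evalP X (symmetrize Q i j)| < ε := by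
  intro X hX i j
  have hτ (τ : Equiv.Perm (Fin n)) :
      |F (permRow τ⁻¹ X) (τ⁻¹ i) j - evalP (permRow τ⁻¹ X) (Q (τ⁻¹ i) j)| < ε :=
    hQ _ (hK _ X hX) _ _
  rw [eq_expect_of_equivariant hF, evalP_symmetrize, ← expect_sub_distrib]
  exact (abs_expect_le _ _).trans_lt
    (expect_lt (fun τ _ => (hτ τ).le) ⟨1, mem_univ _, hτ 1⟩)

theorem exists_equivariant_near_of_isCompact {K : Set (Fin n → Fin k → ℝ)} (hK : IsCompact K)
    (hKinv : ∀ (σ : Equiv.Perm (Fin n)), ∀ X ∈ K, permRow σ X ∈ K)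
    {F : (Fin n → Fin k → ℝ) → Fin n → Fin m → ℝ} (hcont : Continuous F)
    (hF : ∀ (σ : Equiv.Perm (Fin n)) X i, F (permRow σ X) i = F X (σ⁻¹ i))
    {ε : ℝ} (hε : 0 < ε) :
    ∃ P : Fin n → Fin m → MvPolynomial (Fin n × Fin k) ℝ,
      (∀ (σ : Equiv.Perm (Fin n)) X i j,
        evalP (permRow σ X) (P i j) = evalP X (P (σ⁻¹ i) j)) ∧
      ∀ X ∈ K, ∀ i j, |F X i j - evalP X (P i j)| < ε := by
  choose Q hQ using fun i j =>
    exists_evalP_near_of_isCompact hK ⟨fun X => F X i j, by fun_prop⟩ hε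
  exact ⟨symmetrize Q, evalP_symmetrize_permRow Q,
    abs_sub_evalP_symmetrize_lt hKinv hF fun X hX i j => hQ i j X hX⟩

end

/-- Permutation-equivariant polynomial maps are dense (in sup norm over the cube
`[0,1]^{n×k_in}`) in the space of continuous permutation-equivariant functions. -/
theorem equivariant_polys_dense (n kin kout : ℕ)
    (F : (Fin n → Fin kin → ℝ) → Fin n → Fin kout → ℝ)
    (hcont : Continuous F)
    (hequiv : ∀ (σ : Equiv.Perm (Fin n)) (X : Fin n → Fin kin → ℝ) (i : Fin n),
      F (permRow σ X) i = F X (σ⁻¹ i))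
    (ε : ℝ) (hε : 0 < ε) :
    ∃ P : Fin n → Fin kout → MvPolynomial (Fin n × Fin kin) ℝ,
      (∀ (σ : Equiv.Perm (Fin n)) (X : Fin n → Fin kin → ℝ) (i : Fin n) (j : Fin kout),
        evalP (permRow σ X) (P i j) = evalP X (P (σ⁻¹ i) j)) ∧
      ∀ X : Fin n → Fin kin → ℝ, (∀ i j, X i j ∈ Set.Icc (0 : ℝ) 1) →
        ∀ i j, |F X i j - evalP X (P i j)| < ε := by
  obtain ⟨P, hequivP, hnear⟩ := exists_equivariant_near_of_isCompact isCompact_Icc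
    (fun σ _ => permRow_mem_Icc σ) hcont hequiv hε
  exact ⟨P, hequivP, fun X hX => hnear X ⟨fun i j => (hX i j).1, fun i j => (hX i j).2⟩⟩
end

section
/- For X, Y ∈ ℝ^(n×k): there exists σ ∈ S_n with Y = σ·X (i.e., the rows of Y are a permutation of the rows of X) if and only if s_α(X) = s_α(Y) for all multi-indices α ∈ ℕ^k with |α| ≤ n, where s_α(X) = ∑_{i=1}^n x_i^α are the power-sum multi-symmetric polynomials. -/
/-!
Project the rows onto a generic line `x ↦ t ⬝ᵥ x`, one that separates the finitely many rows
of `X` and `Y` (a vector space over an infinite field is not a finite union of proper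
subspaces). By the multinomial theorem, the `m`-th power sum of the projected rows is a linear
combination of the `s_α` with `|α| = m`, so for `m ≤ n` these power sums agree. By Newton's
identities and Vieta, `n` numbers are determined up to order by their first `n` power sums;
hence the projected rows, and then the rows themselves, agree as multisets.
-/

open Finset MvPolynomial

theorem MvPolynomial.eval_esymm_eq_of_eval_psum_eq {σ R : Type*} [Fintype σ] [CommRing R]
    [NoZeroDivisors R] [CharZero R] {a b : σ → R} {N : ℕ}
    (h : ∀ m, 1 ≤ m → m ≤ N → eval a (psum σ R m) = eval b (psum σ R m)) :
    ∀ m ≤ N, eval a (esymm σ R m) = eval b (esymm σ R m) := by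
  intro m
  induction m using Nat.strong_induction_on with
  | _ m ih =>
    intro hm
    rcases Nat.eq_zero_or_pos m with rfl | hpos
    · simp [esymm_zero]
    have newton (c : σ → R) := congrArg (eval c) (mul_esymm_eq_sum σ R m)
    simp only [map_mul, map_natCast, map_pow, map_neg, map_one, map_sum] at newton
    refine mul_left_cancel₀ (Nat.cast_ne_zero.mpr hpos.ne') ?_
    rw [newton a, newton b]
    refine congrArg _ (Finset.sum_congr rfl fun p hp => ?_)
    obtain ⟨hsum, hlt⟩ := Finset.mem_filter.mp hp
    rw [Finset.HasAntidiagonal.mem_antidiagonal] at hsum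
    rw [ih p.1 hlt (by omega), h p.2 (by omega) (by omega)]

theorem Multiset.eq_of_esymm_eq {R : Type*} [CommRing R] [IsDomain R] {s t : Multiset R}
    (hcard : card s = card t) (h : ∀ m ≤ card s, s.esymm m = t.esymm m) : s = t := by
  have hprod : (s.map fun r => Polynomial.X - Polynomial.C r).prod =
      (t.map fun r => Polynomial.X - Polynomial.C r).prod := by
    rw [Multiset.prod_X_sub_X_eq_sum_esymm, Multiset.prod_X_sub_X_eq_sum_esymm, ← hcard]
    refine Finset.sum_congr rfl fun m hm => ?_
    rw [h m (Nat.lt_succ_iff.mp (Finset.mem_range.mp hm))]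
  simpa only [Polynomial.roots_multiset_prod_X_sub_C] using congrArg Polynomial.roots hprod

theorem map_univ_eq_of_sum_pow_eq {ι R : Type*} [Fintype ι] [CommRing R] [IsDomain R]
    [CharZero R] {a b : ι → R}
    (h : ∀ m, 1 ≤ m → m ≤ Fintype.card ι → ∑ i, a i ^ m = ∑ i, b i ^ m) :
    univ.val.map a = univ.val.map b := by
  have esymm_eq := eval_esymm_eq_of_eval_psum_eq (a := a) (b := b) fun m h1 h2 => by
    simpa [psum] using h m h1 h2
  refine Multiset.eq_of_esymm_eq (by simp) fun m hm => ?_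
  rw [← aeval_esymm_eq_multiset_esymm ι R, ← aeval_esymm_eq_multiset_esymm ι R]
  exact esymm_eq m (by simpa using hm)

theorem sum_pow_dotProduct_eq {ι κ R : Type*} [Fintype ι] [Fintype κ] [DecidableEq ι]
    [CommSemiring R] (t : ι → R) (Z : κ → ι → R) (m : ℕ) :
    ∑ i, (t ⬝ᵥ Z i) ^ m = ∑ α ∈ piAntidiag univ m,
      (Nat.multinomial univ α * ∏ j, t j ^ α j) * ∑ i, ∏ j, Z i j ^ α j := by
  simp_rw [dotProduct, Finset.sum_pow_eq_sum_piAntidiag, mul_pow, Finset.prod_mul_distrib,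
    Finset.mul_sum]
  rw [Finset.sum_comm]
  refine Finset.sum_congr rfl fun α _ => Finset.sum_congr rfl fun i _ => ?_
  ring

theorem Module.Dual.exists_injOn {K V : Type*} [Field K] [Infinite K] [AddCommGroup V]
    [Module K V] {s : Set V} (hs : s.Finite) : ∃ f : Module.Dual K V, Set.InjOn f s := by
  have : Finite s.offDiag := (hs.offDiag).to_subtype
  let W : s.offDiag → Subspace K (Module.Dual K V) := fun p =>
    LinearMap.ker (Module.Dual.eval K V (p.1.1 - p.1.2))
  have hW : ∀ p, W p ≠ ⊤ := by
    rintro ⟨⟨u, v⟩, huv⟩ htop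
    have : u - v = 0 := (Module.forall_dual_apply_eq_zero_iff K (u - v)).mp fun φ =>
      LinearMap.mem_ker.mp (htop ▸ Submodule.mem_top : φ ∈ W ⟨(u, v), huv⟩)
    exact huv.2.2 (sub_eq_zero.mp this)
  obtain ⟨f, hf⟩ : ∃ f, f ∉ ⋃ p, (W p : Set (Module.Dual K V)) := by
    by_contra! hcover
    obtain ⟨p, hp⟩ :=
      Subspace.exists_eq_top_of_iUnion_eq_univ (Set.eq_univ_iff_forall.mpr hcover)
    exact hW p hp
  refine ⟨f, fun u hu v hv huv => by_contra fun hne => hf ?_⟩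
  exact Set.mem_iUnion.mpr ⟨⟨(u, v), hu, hv, hne⟩, by simp [W, huv]⟩

theorem exists_injOn_dotProduct {ι K : Type*} [Fintype ι] [Field K] [Infinite K]
    {s : Set (ι → K)} (hs : s.Finite) : ∃ t : ι → K, Set.InjOn (t ⬝ᵥ ·) s := by
  classical
  obtain ⟨f, hf⟩ := Module.Dual.exists_injOn (K := K) hs
  refine ⟨(dotProductEquiv K ι).symm f, ?_⟩
  simpa only [← dotProductEquiv_apply_apply, LinearEquiv.apply_symm_apply] using hf

theorem Multiset.eq_of_map_eq_map_of_injOn {α β : Type*} {f : α → β} {s t : Multiset α}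
    (hf : Set.InjOn f {x | x ∈ s + t}) (h : s.map f = t.map f) : s = t := by
  classical
  have count_eq : ∀ u ≤ s + t, ∀ a ∈ s + t, (u.map f).count (f a) = u.count a := by
    intro u hu a ha
    rw [Multiset.count_map, Multiset.count_eq_card_filter_eq]
    congr 1
    exact Multiset.filter_congr fun x hx =>
      ⟨fun hfx => hf ha (Multiset.mem_of_le hu hx) hfx, congrArg f⟩
  ext a
  by_cases ha : a ∈ s + t
  · rw [← count_eq s (Multiset.le_add_right s t) a ha,
      ← count_eq t (Multiset.le_add_left t s) a ha, h]
  · rw [Multiset.mem_add, not_or] at ha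
    rw [Multiset.count_eq_zero.mpr ha.1, Multiset.count_eq_zero.mpr ha.2]

theorem exists_perm_eq_comp_of_map_univ_eq {ι α : Type*} [Fintype ι] {f g : ι → α}
    (h : univ.val.map f = univ.val.map g) : ∃ σ : Equiv.Perm ι, g = f ∘ σ := by
  classical
  have card_fiber : ∀ c, Fintype.card {i // g i = c} = Fintype.card {i // f i = c} := by
    intro c
    simpa only [Fintype.card_subtype, Multiset.count_map, Finset.card, Finset.filter_val,
      eq_comm] using (congrArg (Multiset.count c) h).symm
  exact ⟨Equiv.ofFiberEquiv fun c => Fintype.equivOfCardEq (card_fiber c),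
    funext fun i => (Equiv.ofFiberEquiv_map _ i).symm⟩

/-- The power-sum multi-symmetric polynomials of degree at most `n` determine the
multiset of rows: `Y` is a row-permutation of `X` iff `s_α(X) = s_α(Y)` for all
multi-indices `α` with `|α| ≤ n`. -/
theorem powersum_characterizes_rows (n k : ℕ) (X Y : Fin n → Fin k → ℝ) :
    (∃ σ : Equiv.Perm (Fin n), Y = permRow σ X) ↔
      ∀ α : Fin k → ℕ, (∑ j, α j) ≤ n →
        (∑ i, ∏ j, X i j ^ α j) = ∑ i, ∏ j, Y i j ^ α j := by
  constructor
  · rintro ⟨σ, rfl⟩ α _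
    exact (Equiv.sum_comp σ⁻¹ fun i => ∏ j, X i j ^ α j).symm
  intro h
  obtain ⟨t, ht⟩ := exists_injOn_dotProduct ((Set.finite_range X).union (Set.finite_range Y))
  have projections_eq : univ.val.map (t ⬝ᵥ X ·) = univ.val.map (t ⬝ᵥ Y ·) := by
    refine map_univ_eq_of_sum_pow_eq fun m _ hm => ?_
    rw [sum_pow_dotProduct_eq, sum_pow_dotProduct_eq]
    refine Finset.sum_congr rfl fun α hα => ?_
    rw [h α (((Finset.mem_piAntidiag.mp hα).1).trans_le (by simpa using hm))]
  have rows_eq : univ.val.map X = univ.val.map Y := by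
    refine Multiset.eq_of_map_eq_map_of_injOn (ht.mono ?_) ?_
    · intro x hx
      simp only [Set.mem_ofPred_eq, Multiset.mem_add, Multiset.mem_map] at hx
      rcases hx with ⟨i, -, rfl⟩ | ⟨i, -, rfl⟩
      exacts [Or.inl ⟨i, rfl⟩, Or.inr ⟨i, rfl⟩]
    · rw [Multiset.map_map, Multiset.map_map]
      exact projections_eq
  obtain ⟨σ, hσ⟩ := exists_perm_eq_comp_of_map_univ_eq rows_eq
  exact ⟨σ⁻¹, funext fun i => by simp [hσ, permRow]⟩
end
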